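/- Let Z be the block downshift operator and A, B, C, K matrices as in system level synthesis, with x = Z(A x + B u) + w, y = C x + v, u = K y. Then the closed-loop solution is uniquely given by x = Φ_xx w + Φ_xy v and u = Φ_ux w + Φ_uy v, where Φ_xx = (I - Z(A+BKC))^{-1}, Φ_xy = Φ_xx Z B K, Φ_ux = K C Φ_xx, Φ_uy = K + K C Φ_xx Z B K. -/
import Mathlib


open Matrix MeasureTheory

/-- A matrix with `(T+1)×(T+1)` blocks is block lower triangular if every block
strictly above the block diagonal is zero. -/
def IsBLT {T a b : ℕ} (M : Matrix (Fin (T+1) × Fin a) (Fin (T+1) × Fin b) ℝ) : Prop :=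
  ∀ p q, p.1 < q.1 → M p q = 0

/-- Strictly block lower triangular: all blocks on and above the block diagonal vanish. -/
def IsStrictBLT {T a b : ℕ} (M : Matrix (Fin (T+1) × Fin a) (Fin (T+1) × Fin b) ℝ) : Prop :=
  ∀ p q, p.1 ≤ q.1 → M p q = 0

/-- Block diagonal: off-diagonal blocks vanish. -/
def IsBD {T a b : ℕ} (M : Matrix (Fin (T+1) × Fin a) (Fin (T+1) × Fin b) ℝ) : Prop :=
  ∀ p q, p.1 ≠ q.1 → M p q = 0

/-- `lead t ht M` is the leading principal block submatrix `M(:t)` consisting of the first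
`t+1` block rows and block columns of `M`. -/
def lead {T a b : ℕ} (t : ℕ) (ht : t + 1 ≤ T + 1)
    (M : Matrix (Fin (T+1) × Fin a) (Fin (T+1) × Fin b) ℝ) :
    Matrix (Fin (t+1) × Fin a) (Fin (t+1) × Fin b) ℝ :=
  M.submatrix (Prod.map (Fin.castLE ht) id) (Prod.map (Fin.castLE ht) id)

/-- The block downshift operator: `T` identity `n×n` blocks on the first block subdiagonal,
zeros elsewhere. -/
def dshift (n T : ℕ) : Matrix (Fin (T+1) × Fin n) (Fin (T+1) × Fin n) ℝ :=
  fun p q => if (p.1 : ℕ) = (q.1 : ℕ) + 1 ∧ p.2 = q.2 then 1 else 0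

section Aux
open Matrix Finset

lemma myIsBD_isBLT {T a b : ℕ} {M : Matrix (Fin (T+1) × Fin a) (Fin (T+1) × Fin b) ℝ}
    (h : IsBD M) : IsBLT M := fun p q hpq => h p q (ne_of_lt hpq)

lemma myIsBLT_mul {T a b c : ℕ} {M : Matrix (Fin (T+1) × Fin a) (Fin (T+1) × Fin b) ℝ}
    {N : Matrix (Fin (T+1) × Fin b) (Fin (T+1) × Fin c) ℝ}
    (hM : IsBLT M) (hN : IsBLT N) : IsBLT (M * N) := by
  intro pp q hpq
  rw [Matrix.mul_apply]
  apply Finset.sum_eq_zero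
  intro r _
  by_cases h : pp.1 < r.1
  · rw [hM pp r h, zero_mul]
  · rw [hN r q (lt_of_le_of_lt (not_lt.mp h) hpq), mul_zero]

lemma myIsBLT_add {T a b : ℕ} {M N : Matrix (Fin (T+1) × Fin a) (Fin (T+1) × Fin b) ℝ}
    (hM : IsBLT M) (hN : IsBLT N) : IsBLT (M + N) := by
  intro pp q hpq
  simp [Matrix.add_apply, hM pp q hpq, hN pp q hpq]

lemma myDshift_mul_strict {T n b : ℕ} {M : Matrix (Fin (T+1) × Fin n) (Fin (T+1) × Fin b) ℝ}
    (hM : IsBLT M) : IsStrictBLT (dshift n T * M) := by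
  intro pp q hpq
  rw [Matrix.mul_apply]
  apply Finset.sum_eq_zero
  intro r _
  by_cases h : (pp.1 : ℕ) = (r.1 : ℕ) + 1 ∧ pp.2 = r.2
  · have hr : r.1 < q.1 := by
      rw [Fin.lt_def]
      have := Fin.le_def.mp hpq
      omega
    rw [hM r q hr, mul_zero]
  · rw [show dshift n T pp r = 0 by simp [dshift, h], zero_mul]

lemma myStrictBLT_nilpotent {T a : ℕ} {N : Matrix (Fin (T+1) × Fin a) (Fin (T+1) × Fin a) ℝ}
    (hN : IsStrictBLT N) : N ^ (T + 1) = 0 := by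
  have key : ∀ k (pp q : Fin (T+1) × Fin a), (pp.1 : ℕ) < (q.1 : ℕ) + k → (N ^ k) pp q = 0 := by
    intro k
    induction k with
    | zero =>
      intro pp q h
      rw [pow_zero]
      exact Matrix.one_apply_ne (by rintro rfl; omega)
    | succ k ih =>
      intro pp q h
      rw [pow_succ', Matrix.mul_apply]
      apply Finset.sum_eq_zero
      intro r _
      by_cases hr : pp.1 ≤ r.1
      · rw [hN pp r hr, zero_mul]
      · have : (r.1 : ℕ) < (q.1 : ℕ) + k := by
          have h1 := Fin.lt_def.mp (not_le.mp hr)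
          omega
        rw [ih r q this, mul_zero]
  ext pp q
  have := key (T + 1) pp q (by have := pp.1.isLt; omega)
  simpa using this

end Aux

theorem stmt16 {T n m p : ℕ}
    (A : Matrix (Fin (T+1) × Fin n) (Fin (T+1) × Fin n) ℝ)
    (B : Matrix (Fin (T+1) × Fin n) (Fin (T+1) × Fin p) ℝ)
    (C : Matrix (Fin (T+1) × Fin m) (Fin (T+1) × Fin n) ℝ)
    (K : Matrix (Fin (T+1) × Fin p) (Fin (T+1) × Fin m) ℝ)
    (hA : IsBD A) (hB : IsBD B) (hC : IsBD C) (hK : IsBLT K)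
    (Φxx : Matrix (Fin (T+1) × Fin n) (Fin (T+1) × Fin n) ℝ)
    (Φxy : Matrix (Fin (T+1) × Fin n) (Fin (T+1) × Fin m) ℝ)
    (Φux : Matrix (Fin (T+1) × Fin p) (Fin (T+1) × Fin n) ℝ)
    (Φuy : Matrix (Fin (T+1) × Fin p) (Fin (T+1) × Fin m) ℝ)
    (hΦxx : Φxx = (1 - dshift n T * (A + B * K * C))⁻¹)
    (hΦxy : Φxy = Φxx * dshift n T * B * K)
    (hΦux : Φux = K * C * Φxx)
    (hΦuy : Φuy = K + K * C * Φxx * dshift n T * B * K)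
    (x w : Fin (T+1) × Fin n → ℝ) (u : Fin (T+1) × Fin p → ℝ)
    (y v : Fin (T+1) × Fin m → ℝ)
    (hx : x = (dshift n T).mulVec (A.mulVec x + B.mulVec u) + w)
    (hy : y = C.mulVec x + v)
    (hu : u = K.mulVec y) :
    x = Φxx.mulVec w + Φxy.mulVec v ∧ u = Φux.mulVec w + Φuy.mulVec v := by
  subst hΦxy hΦux hΦuy
  set Z := dshift n T with hZ
  set N := Z * (A + B * K * C) with hNdef
  have hBLT : IsBLT (A + B * K * C) :=
    myIsBLT_add (myIsBD_isBLT hA)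
      (myIsBLT_mul (myIsBLT_mul (myIsBD_isBLT hB) hK) (myIsBD_isBLT hC))
  have hnil : IsNilpotent N := ⟨T + 1, myStrictBLT_nilpotent (myDshift_mul_strict hBLT)⟩
  have hunit : IsUnit (1 - N) := hnil.isUnit_one_sub
  have hdet : IsUnit (1 - N).det := (Matrix.isUnit_iff_isUnit_det _).mp hunit
  have hinv : Φxx * (1 - N) = 1 := by rw [hΦxx]; exact Matrix.nonsing_inv_mul _ hdet
  have hux : u = (K * C).mulVec x + K.mulVec v := by
    rw [hu, hy, Matrix.mulVec_add, Matrix.mulVec_mulVec]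
  have hxeq : x = N.mulVec x + (Z * B * K).mulVec v + w := by
    rw [hNdef]
    calc x = Z.mulVec (A.mulVec x + B.mulVec u) + w := hx
    _ = (Z * (A + B * K * C)).mulVec x + (Z * B * K).mulVec v + w := by
        rw [hux]
        simp only [Matrix.mul_add, Matrix.mulVec_add, Matrix.add_mulVec, Matrix.mulVec_mulVec,
          Matrix.mul_assoc]
        abel
  have hsolve : (1 - N).mulVec x = w + (Z * B * K).mulVec v := by
    rw [Matrix.sub_mulVec, Matrix.one_mulVec]
    nth_rewrite 1 [hxeq]
    abel
  have hxfinal : x = Φxx.mulVec w + (Φxx * Z * B * K).mulVec v := by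
    have h2 := congrArg (Φxx.mulVec) hsolve
    rw [Matrix.mulVec_mulVec, hinv, Matrix.one_mulVec] at h2
    rw [h2, Matrix.mulVec_add]
    simp only [Matrix.mulVec_mulVec, Matrix.mul_assoc]
  refine ⟨hxfinal, ?_⟩
  rw [hux, hxfinal]
  simp only [Matrix.mul_add, Matrix.mulVec_add, Matrix.add_mulVec, Matrix.mulVec_mulVec, Matrix.mul_assoc]
  abel
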